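/- In the system HT (minimal logic plus the truth axioms A → T(A), T(A) ∧ T(B) ↔ T(A ∧ B), T(A) ∨ T(B) → T(A ∨ B), T(A ∨ B) ∧ T(A → C) ∧ T(B → C) → T(C), and T(A) ∧ T(A → B) → T(B)), if there is a liar proposition S with S ↔ T(¬S) derivable, then (S ∨ ¬S) → T(⊥) is derivable. -/
import Mathlib


/-- Propositional formulas built from variables and ⊥ using ∧, ∨, →. -/
inductive Fm : Type
  | var : ℕ → Fm
  | bot : Fm
  | and : Fm → Fm → Fm
  | or : Fm → Fm → Fm
  | imp : Fm → Fm → Fm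
deriving DecidableEq

/-- ¬A is defined as A → ⊥. -/
def Fm.neg (A : Fm) : Fm := A.imp .bot

/-- Hilbert-style derivability in minimal propositional logic (intuitionistic
logic without ex falso quodlibet), extended by an extra set `Ax` of axioms. -/
inductive Deriv (Ax : Fm → Prop) : Fm → Prop
  | ax {A} : Ax A → Deriv Ax A
  | k (A B : Fm) : Deriv Ax (A.imp (B.imp A))
  | s (A B C : Fm) : Deriv Ax ((A.imp (B.imp C)).imp ((A.imp B).imp (A.imp C)))
  | andI (A B : Fm) : Deriv Ax (A.imp (B.imp (A.and B)))
  | andE1 (A B : Fm) : Deriv Ax ((A.and B).imp A)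
  | andE2 (A B : Fm) : Deriv Ax ((A.and B).imp B)
  | orI1 (A B : Fm) : Deriv Ax (A.imp (A.or B))
  | orI2 (A B : Fm) : Deriv Ax (B.imp (A.or B))
  | orE (A B C : Fm) : Deriv Ax ((A.imp C).imp ((B.imp C).imp ((A.or B).imp C)))
  | mp {A B : Fm} : Deriv Ax (A.imp B) → Deriv Ax A → Deriv Ax B

/-- The truth axiom schemes of the system HT, for a syntactic truth operator `T`. -/
inductive HTAx (T : Fm → Fm) : Fm → Prop
  | t1 (A : Fm) : HTAx T (A.imp (T A))
  | t2a (A B : Fm) : HTAx T (((T A).and (T B)).imp (T (A.and B)))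
  | t2b (A B : Fm) : HTAx T ((T (A.and B)).imp ((T A).and (T B)))
  | t3 (A B : Fm) : HTAx T (((T A).or (T B)).imp (T (A.or B)))
  | t4 (A B C : Fm) :
      HTAx T (((T (A.or B)).and ((T (A.imp C)).and (T (B.imp C)))).imp (T C))
  | t5 (A B : Fm) : HTAx T (((T A).and (T (A.imp B))).imp (T B))


theorem Deriv.mono {Ax Ax' : Fm → Prop} (h : ∀ A, Ax A → Ax' A) :
    ∀ {B}, Deriv Ax B → Deriv Ax' B := by
  intro B d
  induction d with
  | ax hA => exact .ax (h _ hA)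
  | k A B => exact .k A B
  | s A B C => exact .s A B C
  | andI A B => exact .andI A B
  | andE1 A B => exact .andE1 A B
  | andE2 A B => exact .andE2 A B
  | orI1 A B => exact .orI1 A B
  | orI2 A B => exact .orI2 A B
  | orE A B C => exact .orE A B C
  | mp _ _ ih1 ih2 => exact .mp ih1 ih2

theorem Deriv.id (Ax : Fm → Prop) (A : Fm) : Deriv Ax (A.imp A) :=
  .mp (.mp (.s A (A.imp A) A) (.k A (A.imp A))) (.k A A)

/-- Deduction theorem. -/
theorem Deriv.ded {Ax : Fm → Prop} {A B : Fm}
    (d : Deriv (fun X => Ax X ∨ X = A) B) : Deriv Ax (A.imp B) := by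
  induction d with
  | @ax C hC =>
    rcases hC with h | rfl
    · exact .mp (.k C A) (.ax h)
    · exact Deriv.id Ax _
  | mp _ _ ih1 ih2 => exact .mp (.mp (.s _ _ _) ih1) ih2
  | k X Y => exact .mp (.k _ A) (.k X Y)
  | s X Y Z => exact .mp (.k _ A) (.s X Y Z)
  | andI X Y => exact .mp (.k _ A) (.andI X Y)
  | andE1 X Y => exact .mp (.k _ A) (.andE1 X Y)
  | andE2 X Y => exact .mp (.k _ A) (.andE2 X Y)
  | orI1 X Y => exact .mp (.k _ A) (.orI1 X Y)
  | orI2 X Y => exact .mp (.k _ A) (.orI2 X Y)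
  | orE X Y Z => exact .mp (.k _ A) (.orE X Y Z)

/-- in HT, if S ↔ T(¬S) is derivable then (S ∨ ¬S) → T(⊥)
is derivable. -/
theorem stmt3 (T : Fm → Fm) (S : Fm)
    (hS1 : Deriv (HTAx T) (S.imp (T S.neg)))
    (hS2 : Deriv (HTAx T) ((T S.neg).imp S)) :
    Deriv (HTAx T) ((S.or S.neg).imp (T .bot)) := by

  have wk : ∀ {C B : Fm}, Deriv (HTAx T) B →
      Deriv (fun X => HTAx T X ∨ X = C) B :=
    fun h => Deriv.mono (fun _ h => Or.inl h) h
  have h1 : Deriv (HTAx T) (S.imp (T .bot)) := by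
    apply Deriv.ded
    have hs : Deriv (fun X => HTAx T X ∨ X = S) S := .ax (Or.inr rfl)
    have hts : Deriv (fun X => HTAx T X ∨ X = S) (T S) :=
      .mp (.ax (Or.inl (HTAx.t1 S))) hs
    have htns : Deriv (fun X => HTAx T X ∨ X = S) (T S.neg) :=
      .mp (wk hS1) hs
    have hand : Deriv (fun X => HTAx T X ∨ X = S) ((T S).and (T S.neg)) :=
      .mp (.mp (.andI _ _) hts) htns
    exact .mp (.ax (Or.inl (HTAx.t5 S .bot))) hand
  have h2 : Deriv (HTAx T) (S.neg.imp (T .bot)) := by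
    apply Deriv.ded
    have hns : Deriv (fun X => HTAx T X ∨ X = S.neg) S.neg := .ax (Or.inr rfl)
    have htns : Deriv (fun X => HTAx T X ∨ X = S.neg) (T S.neg) :=
      .mp (.ax (Or.inl (HTAx.t1 S.neg))) hns
    have hs : Deriv (fun X => HTAx T X ∨ X = S.neg) S := .mp (wk hS2) htns
    have hbot : Deriv (fun X => HTAx T X ∨ X = S.neg) Fm.bot := .mp hns hs
    exact .mp (.ax (Or.inl (HTAx.t1 .bot))) hbot
  exact .mp (.mp (.orE S S.neg (T .bot)) h1) h2
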